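/- arXiv:1208.1291 — 3 statements merged into one kernel-verified Lean document; each statement's English description precedes it below -/
import Mathlib

section
/- For a kG-module homomorphism ρ : M → N, if ρ factors in Mod(kG) through the surjection π_N : N↑G → N, then there exists a k-linear map θ : M → N with Tr_G(θ) = ρ. -/
/-! Take `θ` to be the component at `1` of the equivariant lift `ρ' : M → N↑G`. Equivariance
gives `ρ'(m)(g) = θ(g⁻¹m)`, so `Tr_G(θ)(m) = ∑ g, g·ρ'(m)(g) = π_N(ρ'(m)) = ρ(m)`. -/

open Finset

universe u

section Prelude

variable {k G : Type u} [CommRing k] [Group G] [Fintype G]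
variable {M N : Type u} [AddCommGroup M] [Module k M] [AddCommGroup N] [Module k N]

/-- The trace map `Tr_G(θ)(m) = ∑ g, g • θ(g⁻¹ • m)`. -/
noncomputable def traceMap (ρM : Representation k G M) (ρN : Representation k G N)
    (θ : M →ₗ[k] N) : M →ₗ[k] N :=
  ∑ g : G, (ρN g) ∘ₗ θ ∘ₗ (ρM g⁻¹)

/-- `f` is a `kG`-module homomorphism, i.e. a `G`-equivariant `k`-linear map. -/
def IsGEquiv (ρM : Representation k G M) (ρN : Representation k G N)
    (f : M →ₗ[k] N) : Prop :=
  ∀ g : G, f ∘ₗ (ρM g) = (ρN g) ∘ₗ f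

/-- The induced module `M↑G = kG ⊗ₖ M`, modelled as `G →₀ M`, where `h • (g ⊗ m) = hg ⊗ m`. -/
noncomputable def ind (k G M : Type u) [CommRing k] [Group G] [AddCommGroup M] [Module k M] :
    Representation k G (G →₀ M) where
  toFun h := Finsupp.lmapDomain M k (fun x => h * x)
  map_one' := by
    refine LinearMap.ext fun f => ?_
    show Finsupp.mapDomain (fun x => (1:G) * x) f = f
    simp only [one_mul]
    exact Finsupp.mapDomain_id
  map_mul' h₁ h₂ := by
    refine LinearMap.ext fun f => ?_
    simp only [Finsupp.lmapDomain_apply, Module.End.mul_apply]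
    rw [show (fun x => h₁ * h₂ * x) = (fun x => h₁ * x) ∘ (fun x => h₂ * x) by
      funext x; simp [mul_assoc]]
    exact Finsupp.mapDomain_comp

/-- The natural map `ι_M : M → M↑G`, `m ↦ ∑ g, g ⊗ g⁻¹m`. -/
noncomputable def indI (ρM : Representation k G M) : M →ₗ[k] (G →₀ M) :=
  ∑ g : G, (Finsupp.lsingle g) ∘ₗ (ρM g⁻¹)

/-- The natural map `π_M : M↑G → M`, `g ⊗ m ↦ g·m`. -/
noncomputable def indP (ρM : Representation k G M) : (G →₀ M) →ₗ[k] M :=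
  Finsupp.lsum k fun g => (ρM g : M →ₗ[k] M)

end Prelude

section InducedModule

variable {k G : Type u} [CommRing k] [Group G]
variable {M N : Type u} [AddCommGroup M] [Module k M] [AddCommGroup N] [Module k N]

theorem ind_apply_mul (h x : G) (f : G →₀ N) : ind k G N h f (h * x) = f x :=
  Finsupp.mapDomain_apply (mul_right_injective h) f x

theorem indP_apply [Fintype G] (ρN : Representation k G N) (f : G →₀ N) :
    indP ρN f = ∑ g : G, ρN g (f g) := by
  rw [indP, Finsupp.lsum_apply, Finsupp.sum_fintype _ _ fun g => map_zero (ρN g)]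

theorem IsGEquiv.apply_one_of_inv {ρM : Representation k G M} {φ : M →ₗ[k] (G →₀ N)}
    (hφ : IsGEquiv ρM (ind k G N) φ) (g : G) (m : M) :
    φ (ρM g⁻¹ m) 1 = φ m g := by
  have hcomm := LinearMap.congr_fun (hφ g⁻¹) m
  rw [LinearMap.comp_apply, LinearMap.comp_apply] at hcomm
  rw [hcomm, ← inv_mul_cancel g, ind_apply_mul]

theorem traceMap_lapply_one_comp [Fintype G] {ρM : Representation k G M}
    (ρN : Representation k G N) {φ : M →ₗ[k] (G →₀ N)} (hφ : IsGEquiv ρM (ind k G N) φ) :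
    traceMap ρM ρN (Finsupp.lapply 1 ∘ₗ φ) = indP ρN ∘ₗ φ := by
  ext m
  simp only [traceMap, LinearMap.sum_apply, LinearMap.comp_apply, Finsupp.lapply_apply,
    hφ.apply_one_of_inv, indP_apply]

end InducedModule

theorem exists_trace_of_factors_through_indP_general
    {k G : Type u} [CommRing k] [Group G] [Fintype G]
    {M N : Type u} [AddCommGroup M] [Module k M] [AddCommGroup N] [Module k N]
    (ρM : Representation k G M) (ρN : Representation k G N)
    (ρ : M →ₗ[k] N)
    (ρ' : M →ₗ[k] (G →₀ N)) (hρ' : IsGEquiv ρM (ind k G N) ρ')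
    (hfac : (indP ρN) ∘ₗ ρ' = ρ) :
    ∃ θ : M →ₗ[k] N, traceMap ρM ρN θ = ρ :=
  ⟨Finsupp.lapply 1 ∘ₗ ρ', by rw [traceMap_lapply_one_comp ρN hρ', hfac]⟩

/-- if a `kG`-homomorphism `ρ : M → N` factors through `π_N : N↑G → N`,
then `ρ = Tr_G(θ)` for some `k`-linear `θ`. -/
theorem exists_trace_of_factors_through_indP
    {k G : Type u} [CommRing k] [Group G] [Fintype G]
    {M N : Type u} [AddCommGroup M] [Module k M] [AddCommGroup N] [Module k N]
    (ρM : Representation k G M) (ρN : Representation k G N)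
    (ρ : M →ₗ[k] N) (hρ : IsGEquiv ρM ρN ρ)
    (ρ' : M →ₗ[k] (G →₀ N)) (hρ' : IsGEquiv ρM (ind k G N) ρ')
    (hfac : (indP ρN) ∘ₗ ρ' = ρ) :
    ∃ θ : M →ₗ[k] N, traceMap ρM ρN θ = ρ :=
  exists_trace_of_factors_through_indP_general ρM ρN ρ ρ' hρ' hfac
end

section
/- A kG-module P is weakly projective if and only if it is weakly injective; that is, Hom_{kG}(P,−) preserves exactness of k-split exact sequences if and only if Hom_{kG}(−,P) does. -/
open Finset

universe u

section WeakDefs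

variable {k G : Type u} [CommRing k] [Group G] [Fintype G]

/-- A `kG`-module `P` is weakly projective if every `kG`-homomorphism out of `P`
lifts along any `k`-split epimorphism of `kG`-modules. -/
def WeaklyProjective {P : Type u} [AddCommGroup P] [Module k P]
    (ρP : Representation k G P) : Prop :=
  ∀ (M N : Type u) [AddCommGroup M] [Module k M] [AddCommGroup N] [Module k N]
    (ρM : Representation k G M) (ρN : Representation k G N) (π : M →ₗ[k] N),
    IsGEquiv ρM ρN π → (∃ s : N →ₗ[k] M, π ∘ₗ s = LinearMap.id) →
    ∀ f : P →ₗ[k] N, IsGEquiv ρP ρN f →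
      ∃ fl : P →ₗ[k] M, IsGEquiv ρP ρM fl ∧ π ∘ₗ fl = f

/-- A `kG`-module `P` is weakly injective if every `kG`-homomorphism into `P`
extends along any `k`-split monomorphism of `kG`-modules. -/
def WeaklyInjective {P : Type u} [AddCommGroup P] [Module k P]
    (ρP : Representation k G P) : Prop :=
  ∀ (L M : Type u) [AddCommGroup L] [Module k L] [AddCommGroup M] [Module k M]
    (ρL : Representation k G L) (ρM : Representation k G M) (ι : L →ₗ[k] M),
    IsGEquiv ρL ρM ι → (∃ r : M →ₗ[k] L, r ∘ₗ ι = LinearMap.id) →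
    ∀ f : L →ₗ[k] P, IsGEquiv ρL ρP f →
      ∃ fe : M →ₗ[k] P, IsGEquiv ρM ρP fe ∧ fe ∘ₗ ι = f

end WeakDefs

/-!
Both properties are equivalent to Higman's criterion: `id_P = Tr_G(θ)` for some `k`-linear
`θ : P → P`. Given such a `θ`, a `k`-linear lift `s ∘ f ∘ θ` (resp. extension `θ ∘ f ∘ r`) of a
`kG`-map `f` becomes a `kG`-linear one after applying `Tr_G`, because `Tr_G` commutes with
composition by `kG`-maps and `Tr_G(θ) = id`. Conversely, `π_P : P↑G → P` is a `k`-split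
epimorphism and `ι_P : P → P↑G` a `k`-split monomorphism, and they are the traces of evaluation
at `1` and of `p ↦ 1 ⊗ p`; so a `kG`-section of `π_P` (resp. retraction of `ι_P`) composed with
these yields `θ`.
-/

section Equivariance

variable {k G : Type u} [CommRing k] [Group G]
variable {M : Type u} [AddCommGroup M] [Module k M] {ρM : Representation k G M}

lemma isGEquiv_id : IsGEquiv ρM ρM LinearMap.id := fun _ => rfl

lemma ind_single (g h : G) (m : M) :
    ind k G M g (Finsupp.single h m) = Finsupp.single (g * h) m :=
  Finsupp.mapDomain_single

lemma indP_comp_lsingle_one : indP ρM ∘ₗ Finsupp.lsingle 1 = LinearMap.id := by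
  ext m
  simp [indP]

end Equivariance

section Trace

variable {k G : Type u} [CommRing k] [Group G] [Fintype G]
variable {L M N : Type u} [AddCommGroup L] [Module k L] [AddCommGroup M] [Module k M]
  [AddCommGroup N] [Module k N]
variable {ρL : Representation k G L} {ρM : Representation k G M} {ρN : Representation k G N}

lemma traceMap_apply (θ : M →ₗ[k] N) (m : M) :
    traceMap ρM ρN θ m = ∑ g : G, ρN g (θ (ρM g⁻¹ m)) := by
  simp [traceMap]

lemma traceMap_isGEquiv (θ : M →ₗ[k] N) : IsGEquiv ρM ρN (traceMap ρM ρN θ) := by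
  intro h
  ext m
  simp only [LinearMap.comp_apply, traceMap_apply, map_sum]
  refine Fintype.sum_equiv (Equiv.mulLeft h⁻¹) _ _ fun g => ?_
  simp only [Equiv.coe_mulLeft, ← Module.End.mul_apply, ← map_mul, mul_inv_rev, inv_inv,
    mul_inv_cancel_left]

lemma IsGEquiv.comp_traceMap {f : N →ₗ[k] L} (hf : IsGEquiv ρN ρL f) (θ : M →ₗ[k] N) :
    f ∘ₗ traceMap ρM ρN θ = traceMap ρM ρL (f ∘ₗ θ) := by
  ext m
  simp only [LinearMap.comp_apply, traceMap_apply, map_sum]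
  exact Finset.sum_congr rfl fun g _ => LinearMap.congr_fun (hf g) _

lemma IsGEquiv.traceMap_comp {f : L →ₗ[k] M} (hf : IsGEquiv ρL ρM f) (θ : M →ₗ[k] N) :
    traceMap ρM ρN θ ∘ₗ f = traceMap ρL ρN (θ ∘ₗ f) := by
  ext l
  simp only [LinearMap.comp_apply, traceMap_apply]
  exact Finset.sum_congr rfl fun g _ =>
    congrArg (fun x => ρN g (θ x)) (LinearMap.congr_fun (hf g⁻¹) l).symm

lemma traceMap_lapply_one : traceMap (ind k G M) ρM (Finsupp.lapply 1) = indP ρM := by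
  classical
  refine Finsupp.lhom_ext fun h m => ?_
  simp [traceMap, ind_single, indP, Finsupp.single_apply, inv_mul_eq_one, apply_ite (ρM _)]

lemma indP_isGEquiv : IsGEquiv (ind k G M) ρM (indP ρM) :=
  traceMap_lapply_one (ρM := ρM) ▸ traceMap_isGEquiv _

lemma traceMap_lsingle_one : traceMap ρM (ind k G M) (Finsupp.lsingle 1) = indI ρM := by
  ext m : 1
  simp [traceMap, indI, ind_single]

lemma indI_isGEquiv : IsGEquiv ρM (ind k G M) (indI ρM) :=
  traceMap_lsingle_one (ρM := ρM) ▸ traceMap_isGEquiv _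

lemma lapply_one_comp_indI : Finsupp.lapply 1 ∘ₗ indI ρM = LinearMap.id := by
  classical
  ext m
  simp [indI, Finsupp.single_apply]

end Trace

section Higman

variable {k G : Type u} [CommRing k] [Group G] [Fintype G]
variable {P : Type u} [AddCommGroup P] [Module k P] {ρP : Representation k G P}

def HigmanCriterion (ρP : Representation k G P) : Prop :=
  ∃ θ : P →ₗ[k] P, traceMap ρP ρP θ = LinearMap.id

lemma HigmanCriterion.weaklyProjective (h : HigmanCriterion ρP) : WeaklyProjective ρP := by
  obtain ⟨θ, hθ⟩ := h
  intro M N _ _ _ _ ρM ρN π hπ ⟨s, hs⟩ f hf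
  refine ⟨traceMap ρP ρM (s ∘ₗ f ∘ₗ θ), traceMap_isGEquiv _, ?_⟩
  calc π ∘ₗ traceMap ρP ρM (s ∘ₗ f ∘ₗ θ)
      = traceMap ρP ρN ((π ∘ₗ s) ∘ₗ f ∘ₗ θ) := hπ.comp_traceMap _
    _ = f ∘ₗ traceMap ρP ρP θ := by rw [hs, LinearMap.id_comp, hf.comp_traceMap]
    _ = f := by rw [hθ, LinearMap.comp_id]

lemma HigmanCriterion.weaklyInjective (h : HigmanCriterion ρP) : WeaklyInjective ρP := by
  obtain ⟨θ, hθ⟩ := h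
  intro L M _ _ _ _ ρL ρM ι hι ⟨r, hr⟩ f hf
  refine ⟨traceMap ρM ρP (θ ∘ₗ f ∘ₗ r), traceMap_isGEquiv _, ?_⟩
  calc traceMap ρM ρP (θ ∘ₗ f ∘ₗ r) ∘ₗ ι
      = traceMap ρL ρP (θ ∘ₗ f ∘ₗ r ∘ₗ ι) := hι.traceMap_comp _
    _ = traceMap ρP ρP θ ∘ₗ f := by rw [hr, LinearMap.comp_id, hf.traceMap_comp]
    _ = f := by rw [hθ, LinearMap.id_comp]

lemma WeaklyProjective.higmanCriterion (h : WeaklyProjective ρP) : HigmanCriterion ρP := by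
  obtain ⟨σ, hσ, hπσ⟩ := h (G →₀ P) P (ind k G P) ρP (indP ρP) indP_isGEquiv
    ⟨_, indP_comp_lsingle_one⟩ LinearMap.id isGEquiv_id
  refine ⟨Finsupp.lapply 1 ∘ₗ σ, ?_⟩
  rw [← hσ.traceMap_comp, traceMap_lapply_one, hπσ]

lemma WeaklyInjective.higmanCriterion (h : WeaklyInjective ρP) : HigmanCriterion ρP := by
  obtain ⟨τ, hτ, hτι⟩ := h P (G →₀ P) ρP (ind k G P) (indI ρP) indI_isGEquiv
    ⟨_, lapply_one_comp_indI⟩ LinearMap.id isGEquiv_id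
  refine ⟨τ ∘ₗ Finsupp.lsingle 1, ?_⟩
  rw [← hτ.comp_traceMap, traceMap_lsingle_one, hτι]

end Higman

/-- `P` is weakly projective iff `P` is weakly injective. -/
theorem weaklyProjective_iff_weaklyInjective
    {k G : Type u} [CommRing k] [Group G] [Fintype G]
    {P : Type u} [AddCommGroup P] [Module k P] (ρP : Representation k G P) :
    WeaklyProjective ρP ↔ WeaklyInjective ρP :=
  ⟨fun h => h.higmanCriterion.weaklyInjective, fun h => h.higmanCriterion.weaklyProjective⟩
end

section
/- Let p be a prime dividing the order of a finite group G, and n ≥ 1. Then the canonical surjection ε : ℤ/p^{n+1} → ℤ/p^n of ℤG-modules (trivial G-action) is not an isomorphism in the stable module category stmod(ℤG); concretely, there is no ℤG-map σ : ℤ/p^n → ℤ/p^{n+1} such that id − εσ factors through the induced module (ℤ/p^n)G → ℤ/p^n. -/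
open Finset

universe u

/-!
Reduce everything modulo `p`. An equivariant `κ` from a trivial module into `(ℤ/pⁿ)G` has
constant value `c = κ 1 1` on `G`, so `π (κ 1) = |G| • c`, a multiple of `p`. On the other
side `σ 1` is killed by `pⁿ` in `ℤ/pⁿ⁺¹`, hence is a multiple of `p`, and so is `ε (σ 1)`.
Evaluating `π ∘ κ = id − ε ∘ σ` at `1` then makes `p` a unit of `ℤ/pⁿ`, which it is not.
-/

section Induced

variable {k G V M : Type u} [CommRing k] [Group G]
  [AddCommGroup V] [Module k V] [AddCommGroup M] [Module k M]

theorem IsGEquiv.trivial_ind_apply_eq_apply_one {κ : V →ₗ[k] (G →₀ M)}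
    (hκ : IsGEquiv (Representation.trivial k G V) (ind k G M) κ) (v : V) (g : G) :
    κ v g = κ v 1 := by
  have hfix : Finsupp.mapDomain (g * ·) (κ v) = κ v := by
    simpa [ind] using (LinearMap.congr_fun (hκ g) v).symm
  simpa [hfix] using Finsupp.mapDomain_apply (mul_right_injective g) (κ v) 1

theorem indP_trivial_apply [Fintype G] (f : G →₀ M) :
    indP (Representation.trivial k G M) f = ∑ g, f g := by
  simp [indP, Finsupp.lsum_apply, Finsupp.sum_fintype]

end Induced

namespace ZMod

theorem exists_eq_mul_of_pow_nsmul_eq_zero {p n : ℕ} (hp : 0 < p) {x : ZMod (p ^ (n + 1))}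
    (hx : p ^ n • x = 0) : ∃ y : ZMod (p ^ (n + 1)), x = p * y := by
  have : NeZero (p ^ (n + 1)) := ⟨(pow_pos hp _).ne'⟩
  have hdvd : p ^ n * p ∣ p ^ n * x.val := by
    rw [← pow_succ, ← natCast_eq_zero_iff]
    simpa [nsmul_eq_mul] using hx
  obtain ⟨q, hq⟩ := (Nat.mul_dvd_mul_iff_left (pow_pos hp n)).mp hdvd
  exact ⟨q, by rw [← natCast_zmod_val x, hq, Nat.cast_mul]⟩

theorem not_isUnit_prime_cast {p n : ℕ} (hp : p.Prime) (hn : 1 ≤ n) :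
    ¬ IsUnit (p : ZMod (p ^ n)) := by
  rw [isUnit_iff_coprime, Nat.coprime_pow_right_iff hn, Nat.coprime_self]
  exact hp.ne_one

end ZMod

/-- if `p` divides `|G|`, the canonical surjection
`ε : ℤ/p^(n+1) → ℤ/p^n` is not an isomorphism in the stable module category: there is
no `ℤG`-map `σ : ℤ/p^n → ℤ/p^(n+1)` such that `id − ε∘σ` factors through the natural
surjection `(ℤ/p^n)G → ℤ/p^n` via a `ℤG`-map `κ`. -/
theorem not_stably_iso_zmod_pow
    {G : Type} [Group G] [Fintype G] (p : ℕ) (hp : p.Prime)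
    (hdvd : p ∣ Fintype.card G) (n : ℕ) (hn : 1 ≤ n) :
    ¬ ∃ (σ : ZMod (p ^ n) →ₗ[ℤ] ZMod (p ^ (n + 1)))
        (κ : ZMod (p ^ n) →ₗ[ℤ] (G →₀ ZMod (p ^ n))),
        IsGEquiv (Representation.trivial ℤ (G := G) (V := ZMod (p ^ n)))
          (ind ℤ G (ZMod (p ^ n))) κ ∧
        (indP (Representation.trivial ℤ (G := G) (V := ZMod (p ^ n)))) ∘ₗ κ =
          LinearMap.id -
            ((ZMod.castHom (pow_dvd_pow p (Nat.le_succ n))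
              (ZMod (p ^ n))).toAddMonoidHom.toIntLinearMap ∘ₗ σ) := by
  rintro ⟨σ, κ, hκ, hfac⟩
  set ε := ZMod.castHom (pow_dvd_pow p (Nat.le_succ n)) (ZMod (p ^ n))
  have hπκ : Fintype.card G • κ 1 1 = 1 - ε (σ 1) := by
    simpa [indP_trivial_apply, hκ.trivial_ind_apply_eq_apply_one]
      using LinearMap.congr_fun hfac 1
  have hσ : p ^ n • σ 1 = 0 := by
    rw [← map_nsmul, nsmul_eq_mul, mul_one, ZMod.natCast_self, map_zero]
  obtain ⟨d, hd⟩ := hdvd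
  obtain ⟨y, hy⟩ := ZMod.exists_eq_mul_of_pow_nsmul_eq_zero hp.pos hσ
  refine ZMod.not_isUnit_prime_cast hp hn (.of_mul_eq_one (d * κ 1 1 + ε y) ?_)
  rw [hd, hy, nsmul_eq_mul, map_mul, map_natCast] at hπκ
  push_cast at hπκ
  linear_combination hπκ
end
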